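/- Let (X,d,𝔪) be a complete, separable metric measure space (possibly non-geodesic) such that for all absolutely continuous μ₀, μ₁ ∈ 𝒫₂^{ac}(X), the set OptGeo(μ₀,μ₁) of optimal dynamical plans is nonempty, and every π ∈ OptGeo(μ₀,μ₁) is induced by a map. Then for any absolutely continuous μ₀, μ₁ ∈ 𝒫₂^{ac}(X), every optimal transport plan σ ∈ Opt(μ₀,μ₁) for the quadratic cost is induced by a map; in particular the optimal plan is unique. -/

import Mathlib

/-!
If an optimal plan `σ` between absolutely continuous measures is not induced by a map, then for
some Borel set `U` the parts of `σ` with target in `U` and in `Uᶜ` have first marginals that are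
not mutually singular: otherwise, for a countable generating family of sets `U`, the sources
sending their mass into `U` determine a map. Conditioning `σ` on a set of sources where the second
marginal is absolutely continuous with respect to the first keeps it optimal, and splits it into
two transport problems between absolutely continuous measures. Gluing optimal geodesic plans for
the two pieces gives an optimal geodesic plan, which by assumption is induced by a map `T`; but `T`
has to send the common source both into `U` and into `Uᶜ`. Uniqueness follows because the average
of two optimal plans is optimal, hence induced by a map whose graph carries both plans.
-/

open MeasureTheory Set ENNReal

noncomputable section

variable {X : Type*} [MetricSpace X]

instance : MeasurableSpace C(unitInterval, X) := borel _
instance : BorelSpace C(unitInterval, X) := ⟨rfl⟩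

/-- A constant-speed geodesic parametrized by `[0,1]`. -/
def IsGeodesicMap (γ : C(unitInterval, X)) : Prop :=
  ∀ s t : unitInterval, dist (γ s) (γ t) = |(s : ℝ) - (t : ℝ)| * dist (γ 0) (γ 1)

variable [MeasurableSpace X] [BorelSpace X]

/-- A coupling (transport plan) of `μ₀` and `μ₁`. -/
def IsCoupling (μ₀ μ₁ : Measure X) (σ : Measure (X × X)) : Prop :=
  IsProbabilityMeasure σ ∧ σ.map Prod.fst = μ₀ ∧ σ.map Prod.snd = μ₁

/-- The quadratic transport cost of a plan. -/
def transportCost (σ : Measure (X × X)) : ℝ≥0∞ :=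
  ∫⁻ p, ENNReal.ofReal (dist p.1 p.2 ^ 2) ∂σ

/-- Optimal transport plans for the quadratic cost. -/
def IsOptimalPlan (μ₀ μ₁ : Measure X) (σ : Measure (X × X)) : Prop :=
  IsCoupling μ₀ μ₁ σ ∧
    ∀ σ' : Measure (X × X), IsCoupling μ₀ μ₁ σ' → transportCost σ ≤ transportCost σ'

/-- Optimal dynamical (geodesic) plans: probability measures on `Geo(X)` whose
endpoint marginals form an optimal plan between `μ₀` and `μ₁`. -/
def IsOptGeoPlan (μ₀ μ₁ : Measure X) (π : Measure C(unitInterval, X)) : Prop :=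
  IsProbabilityMeasure π ∧ π {γ | ¬IsGeodesicMap γ} = 0 ∧
    IsOptimalPlan μ₀ μ₁ (π.map fun γ => (γ 0, γ 1))

/-- `μ ∈ 𝒫₂^{ac}(X)`: a Borel probability measure absolutely continuous w.r.t. `𝔪`
with finite second moment. -/
def IsP2ac (𝔪 μ : Measure X) : Prop :=
  IsProbabilityMeasure μ ∧ μ ≪ 𝔪 ∧ ∃ x₀ : X, ∫⁻ x, ENNReal.ofReal (dist x x₀ ^ 2) ∂μ < ∞

/-- A plan `σ` is induced by a map from `μ₀`. -/
def PlanInducedByMap (μ₀ : Measure X) (σ : Measure (X × X)) : Prop :=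
  ∃ T : X → X, Measurable T ∧ σ = μ₀.map fun x => (x, T x)

/-- A dynamical plan `π` is induced by a map from `μ₀`. -/
def GeoPlanInducedByMap (μ₀ : Measure X) (π : Measure C(unitInterval, X)) : Prop :=
  ∃ S : X → C(unitInterval, X), Measurable S ∧ π = μ₀.map S ∧
    ∀ᵐ x ∂μ₀, (S x) 0 = x

end

open ProbabilityTheory

section Measures

variable {α β : Type*} [MeasurableSpace α] [MeasurableSpace β]

lemma map_smul_add_smul {f : α → β} (hf : Measurable f) (w₁ w₂ : ℝ≥0∞) (μ₁ μ₂ : Measure α) :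
    (w₁ • μ₁ + w₂ • μ₂).map f = w₁ • μ₁.map f + w₂ • μ₂.map f := by
  rw [Measure.map_add _ _ hf, Measure.map_smul, Measure.map_smul]

lemma measure_smul_cond (μ : Measure α) [IsFiniteMeasure μ] (s : Set α) :
    μ s • μ[|s] = μ.restrict s := by
  by_cases hs : μ s = 0
  · simp [hs, Measure.restrict_eq_zero.2 hs]
  · rw [ProbabilityTheory.cond, smul_smul, ENNReal.mul_inv_cancel hs (measure_ne_top μ s), one_smul]

lemma exists_restrict_absolutelyContinuous_of_not_mutuallySingular {μ ν : Measure α}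
    [IsFiniteMeasure μ] [IsFiniteMeasure ν] (h : ¬μ ⟂ₘ ν) :
    ∃ E : Set α, MeasurableSet E ∧ ν E ≠ 0 ∧ ν.restrict E ≪ μ.restrict E := by
  obtain ⟨ε, hε, E, hE, hνE, hle⟩ := Measure.exists_positive_of_not_mutuallySingular μ ν h
  refine ⟨E, hE, hνE.ne', Measure.AbsolutelyContinuous.mk fun A hA hμA => ?_⟩
  rw [Measure.restrict_apply hA] at hμA ⊢
  have := hle A hA
  rw [hμA, nonpos_iff_eq_zero, mul_eq_zero] at this
  exact this.resolve_left (by exact_mod_cast hε.ne')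

lemma ae_fst_notMem_of_map_fst_restrict_eq_zero {σ : Measure (α × β)} {s : Set (α × β)}
    {N : Set α} (hN : MeasurableSet N) (h : (σ.restrict s).map Prod.fst N = 0) :
    ∀ᵐ p ∂σ, p ∈ s → p.1 ∉ N := by
  rw [Measure.map_apply measurable_fst hN, Measure.restrict_apply (measurable_fst hN)] at h
  rw [ae_iff]
  refine measure_mono_null (fun p hp => ?_) h
  simp only [Classical.not_imp, not_not, Set.mem_ofPred_eq] at hp
  exact ⟨hp.2, hp.1⟩

lemma exists_ae_mem_iff_of_mutuallySingular {σ : Measure (α × β)} {U : Set β}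
    (h : (σ.restrict (Prod.snd ⁻¹' U)).map Prod.fst ⟂ₘ
      (σ.restrict (Prod.snd ⁻¹' Uᶜ)).map Prod.fst) :
    ∃ F : Set α, MeasurableSet F ∧ ∀ᵐ p ∂σ, p.2 ∈ U ↔ p.1 ∈ F := by
  refine ⟨h.nullSetᶜ, h.measurableSet_nullSet.compl, ?_⟩
  filter_upwards
    [ae_fst_notMem_of_map_fst_restrict_eq_zero h.measurableSet_nullSet h.measure_nullSet,
      ae_fst_notMem_of_map_fst_restrict_eq_zero h.measurableSet_nullSet.compl
        h.measure_compl_nullSet] with p h₁ h₂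
  by_cases hp : p.2 ∈ U
  · simpa [hp] using h₁ hp
  · simpa [hp] using h₂ hp

-- `T` is read off through the injection `β → (ℕ → Bool)` given by a countable generating family.
lemma exists_measurable_ae_eq_graph [StandardBorelSpace β] [Nonempty β] {σ : Measure (α × β)}
    (h : ∀ U : Set β, MeasurableSet U → ∃ F : Set α, MeasurableSet F ∧
      ∀ᵐ p ∂σ, p.2 ∈ U ↔ p.1 ∈ F) :
    ∃ T : α → β, Measurable T ∧ ∀ᵐ p ∂σ, p.2 = T p.1 := by
  classical
  choose F hF hσF using fun n => h _ (MeasurableSpace.measurableSet_natGeneratingSequence n)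
  have hemb : MeasurableEmbedding (MeasurableSpace.mapNatBool β) :=
    (MeasurableSpace.measurable_mapNatBool β).measurableEmbedding
      (MeasurableSpace.injective_mapNatBool β)
  refine ⟨hemb.invFun ∘ fun x n => decide (x ∈ F n),
    hemb.measurable_invFun.comp (measurable_pi_lambda _ fun n => ?_), ?_⟩
  · exact measurable_to_bool (by simpa [Set.preimage] using hF n)
  · filter_upwards [ae_all_iff.2 hσF] with p hp
    have : MeasurableSpace.mapNatBool β p.2 = fun n => decide (p.1 ∈ F n) :=
      funext fun n => by simp [MeasurableSpace.mapNatBool, hp n]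
    simp [← this, hemb.leftInverse_invFun _]

lemma eq_zero_of_ae_graph_of_absolutelyContinuous {ρ₁ ρ₂ : Measure (α × β)} {T : α → β}
    {U : Set β} (hT : Measurable T) (hU : MeasurableSet U)
    (h₁ : ∀ᵐ p ∂ρ₁, p.2 = T p.1 ∧ p.2 ∈ U) (h₂ : ∀ᵐ p ∂ρ₂, p.2 = T p.1 ∧ p.2 ∉ U)
    (hac : ρ₂.map Prod.fst ≪ ρ₁.map Prod.fst) : ρ₂ = 0 := by
  have hTU : ∀ᵐ x ∂ρ₁.map Prod.fst, T x ∈ U :=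
    (ae_map_iff measurable_fst.aemeasurable (hT hU)).2 (h₁.mono fun p hp => hp.1 ▸ hp.2)
  have hTU₂ : ∀ᵐ p ∂ρ₂, T p.1 ∈ U :=
    (ae_map_iff measurable_fst.aemeasurable (hT hU)).1 (hac.ae_le hTU)
  refine ae_eq_bot.1 (Filter.eventually_false_iff_eq_bot.1 ?_)
  filter_upwards [h₂, hTU₂] with p hp hTp
  exact hp.2 (hp.1 ▸ hTp)

lemma ae_snd_mem_of_map_snd_eq_cond {ρ σ : Measure (α × β)} {V : Set β} (hV : MeasurableSet V)
    (h : ρ.map Prod.snd = (σ[|Prod.snd ⁻¹' V]).map Prod.snd) : ∀ᵐ p ∂ρ, p.2 ∈ V := by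
  have hcond : ∀ᵐ y ∂(σ[|Prod.snd ⁻¹' V]).map Prod.snd, y ∈ V :=
    (ae_map_iff measurable_snd.aemeasurable hV).2 (ae_cond_mem (measurable_snd hV))
  exact (ae_map_iff measurable_snd.aemeasurable hV).1 (h ▸ hcond)

lemma map_fst_restrict_cond_fst_preimage (σ : Measure (α × β)) {E : Set α} (hE : MeasurableSet E)
    {t : Set (α × β)} (ht : MeasurableSet t) :
    ((σ[|Prod.fst ⁻¹' E]).restrict t).map Prod.fst =
      (σ (Prod.fst ⁻¹' E))⁻¹ • ((σ.restrict t).map Prod.fst).restrict E := by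
  rw [ProbabilityTheory.cond, Measure.restrict_smul, Measure.map_smul, Measure.restrict_restrict ht,
    Measure.restrict_map measurable_fst hE, Measure.restrict_restrict (measurable_fst hE),
    Set.inter_comm]

end Measures

section Coupling

variable {X : Type*} [MeasurableSpace X] {μ₀ : Measure X} {σ : Measure (X × X)}

lemma eq_map_graph_of_ae_eq (hσ : σ.map Prod.fst = μ₀) {T : X → X} (hT : Measurable T)
    (hae : ∀ᵐ p ∂σ, p.2 = T p.1) : σ = μ₀.map fun x => (x, T x) :=
  calc σ = σ.map id := Measure.map_id.symm
    _ = σ.map ((fun x => (x, T x)) ∘ Prod.fst) :=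
        Measure.map_congr (hae.mono fun p hp => Prod.ext rfl hp)
    _ = μ₀.map fun x => (x, T x) := by
        rw [← Measure.map_map (measurable_id'.prodMk hT) measurable_fst, hσ]

lemma PlanInducedByMap.exists_ae_eq_graph [MeasurableEq X] (h : PlanInducedByMap μ₀ σ) :
    ∃ T : X → X, Measurable T ∧ ∀ᵐ p ∂σ, p.2 = T p.1 := by
  obtain ⟨T, hT, rfl⟩ := h
  refine ⟨T, hT, (ae_map_iff (measurable_id.prodMk hT).aemeasurable
    (measurableSet_eq_fun measurable_snd (hT.comp measurable_fst))).2 (ae_of_all _ fun _ => rfl)⟩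

lemma IsCoupling.smul_add_smul {α₁ α₂ ν₁ ν₂ : Measure X} {σ₁ σ₂ : Measure (X × X)}
    (h₁ : IsCoupling α₁ ν₁ σ₁) (h₂ : IsCoupling α₂ ν₂ σ₂) {w₁ w₂ : ℝ≥0∞} (hw : w₁ + w₂ = 1) :
    IsCoupling (w₁ • α₁ + w₂ • α₂) (w₁ • ν₁ + w₂ • ν₂) (w₁ • σ₁ + w₂ • σ₂) := by
  obtain ⟨hp₁, hfst₁, hsnd₁⟩ := h₁
  obtain ⟨hp₂, hfst₂, hsnd₂⟩ := h₂
  refine ⟨⟨by simp [hw]⟩, ?_, ?_⟩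
  · rw [map_smul_add_smul measurable_fst, hfst₁, hfst₂]
  · rw [map_smul_add_smul measurable_snd, hsnd₁, hsnd₂]

lemma not_planInducedByMap_smul_add_smul [MeasurableEq X] [IsFiniteMeasure σ]
    {ρ₁ ρ₂ : Measure (X × X)} {U : Set X} (hU : MeasurableSet U)
    (hρ₁ : IsCoupling ((σ[|Prod.snd ⁻¹' U]).map Prod.fst) ((σ[|Prod.snd ⁻¹' U]).map Prod.snd) ρ₁)
    (hρ₂ : IsCoupling ((σ[|Prod.snd ⁻¹' Uᶜ]).map Prod.fst) ((σ[|Prod.snd ⁻¹' Uᶜ]).map Prod.snd) ρ₂)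
    (hac : (σ.restrict (Prod.snd ⁻¹' Uᶜ)).map Prod.fst ≪ (σ.restrict (Prod.snd ⁻¹' U)).map Prod.fst)
    {w₁ w₂ : ℝ≥0∞} (hw₁ : w₁ ≠ 0) (hw₂ : w₂ ≠ 0) :
    ¬PlanInducedByMap μ₀ (w₁ • ρ₁ + w₂ • ρ₂) := by
  intro h
  obtain ⟨T, hT, hae⟩ := h.exists_ae_eq_graph
  have hae₁ : ∀ᵐ p ∂ρ₁, p.2 = T p.1 :=
    ((Measure.absolutelyContinuous_smul hw₁).add_right _).ae_le hae
  have hae₂ : ∀ᵐ p ∂ρ₂, p.2 = T p.1 :=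
    ((Measure.absolutelyContinuous_smul hw₂).add_right' _).ae_le hae
  have hsources : ρ₂.map Prod.fst ≪ ρ₁.map Prod.fst := by
    rw [hρ₁.2.1, hρ₂.2.1, ProbabilityTheory.cond, ProbabilityTheory.cond, Measure.map_smul,
      Measure.map_smul]
    exact (hac.smul_left _).trans
      (Measure.absolutelyContinuous_smul (ENNReal.inv_ne_zero.2 (measure_ne_top _ _)))
  have := hρ₂.1
  exact IsProbabilityMeasure.ne_zero ρ₂ (eq_zero_of_ae_graph_of_absolutelyContinuous hT hU
    (hae₁.and (ae_snd_mem_of_map_snd_eq_cond hU hρ₁.2.2))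
    (hae₂.and (ae_snd_mem_of_map_snd_eq_cond hU.compl hρ₂.2.2)) hsources)

end Coupling

section Cost

variable {X : Type*} [MetricSpace X] [MeasurableSpace X] {μ₀ μ₁ : Measure X}
  {σ : Measure (X × X)}

@[simp]
lemma transportCost_add (σ₁ σ₂ : Measure (X × X)) :
    transportCost (σ₁ + σ₂) = transportCost σ₁ + transportCost σ₂ :=
  lintegral_add_measure _ _ _

@[simp]
lemma transportCost_smul (c : ℝ≥0∞) (σ : Measure (X × X)) :
    transportCost (c • σ) = c * transportCost σ :=
  lintegral_smul_measure _ _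

lemma IsCoupling.transportCost_ne_top [BorelSpace X] (hσ : IsCoupling μ₀ μ₁ σ) {x₀ x₁ : X}
    (h₀ : ∫⁻ x, ENNReal.ofReal (dist x x₀ ^ 2) ∂μ₀ < ∞)
    (h₁ : ∫⁻ x, ENNReal.ofReal (dist x x₁ ^ 2) ∂μ₁ < ∞) : transportCost σ ≠ ∞ := by
  have := hσ.1
  set m₀ : X → ℝ≥0∞ := fun x => ENNReal.ofReal (dist x x₀ ^ 2)
  set m₁ : X → ℝ≥0∞ := fun x => ENNReal.ofReal (dist x x₁ ^ 2)
  set C : ℝ≥0∞ := ENNReal.ofReal (dist x₀ x₁ ^ 2)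
  have hm₀ : Measurable m₀ := by fun_prop
  have hm₁ : Measurable m₁ := by fun_prop
  have hbound : ∀ p : X × X,
      ENNReal.ofReal (dist p.1 p.2 ^ 2) ≤ 3 * m₀ p.1 + 3 * C + 3 * m₁ p.2 := by
    intro p
    have hsq :
        dist p.1 p.2 ^ 2 ≤ 3 * dist p.1 x₀ ^ 2 + 3 * dist x₀ x₁ ^ 2 + 3 * dist p.2 x₁ ^ 2 := by
      nlinarith [dist_triangle4 p.1 x₀ x₁ p.2, dist_comm x₁ p.2, dist_nonneg (x := p.1) (y := p.2),
        sq_nonneg (dist p.1 x₀ - dist x₀ x₁), sq_nonneg (dist p.1 x₀ - dist p.2 x₁),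
        sq_nonneg (dist x₀ x₁ - dist p.2 x₁)]
    calc ENNReal.ofReal (dist p.1 p.2 ^ 2)
        ≤ ENNReal.ofReal (3 * dist p.1 x₀ ^ 2 + 3 * dist x₀ x₁ ^ 2 + 3 * dist p.2 x₁ ^ 2) :=
          ENNReal.ofReal_le_ofReal hsq
      _ = 3 * m₀ p.1 + 3 * C + 3 * m₁ p.2 := by
          simp only [m₀, m₁, C]
          rw [ENNReal.ofReal_add (by positivity) (by positivity),
            ENNReal.ofReal_add (by positivity) (by positivity), ENNReal.ofReal_mul (by norm_num),
            ENNReal.ofReal_mul (by norm_num), ENNReal.ofReal_mul (by norm_num),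
            ENNReal.ofReal_ofNat]
  refine ne_top_of_le_ne_top ?_ (lintegral_mono hbound)
  rw [lintegral_add_right _ (by fun_prop), lintegral_add_right _ measurable_const, lintegral_const,
    measure_univ, mul_one, lintegral_const_mul _ (by fun_prop), lintegral_const_mul _ (by fun_prop),
    ← lintegral_map hm₀ measurable_fst, ← lintegral_map hm₁ measurable_snd, hσ.2.1, hσ.2.2]
  exact ENNReal.add_ne_top.2 ⟨ENNReal.add_ne_top.2 ⟨ENNReal.mul_ne_top (by norm_num) h₀.ne,
    ENNReal.mul_ne_top (by norm_num) ENNReal.ofReal_ne_top⟩,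
    ENNReal.mul_ne_top (by norm_num) h₁.ne⟩

-- A cheaper competitor `τ` for `σ[|S]`, rescaled and put in place of `σ` on `S`, would beat `σ`;
-- the finite cost of `σ` off `S` is what lets the comparison be cancelled down to `S`.
lemma IsOptimalPlan.cond (hσ : IsOptimalPlan μ₀ μ₁ σ) (hfin : transportCost σ ≠ ∞)
    {S : Set (X × X)} (hS : MeasurableSet S) (hS₀ : σ S ≠ 0) :
    IsOptimalPlan ((σ[|S]).map Prod.fst) ((σ[|S]).map Prod.snd) σ[|S] := by
  have := hσ.1.1
  refine ⟨⟨cond_isProbabilityMeasure hS₀, rfl, rfl⟩, fun τ hτ => ?_⟩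
  have hσS := measure_smul_cond σ S
  have hmarg : ∀ f : X × X → X, Measurable f → τ.map f = (σ[|S]).map f →
      (σ S • τ + σ.restrict Sᶜ).map f = σ.map f := by
    intro f hf h
    rw [Measure.map_add _ _ hf, Measure.map_smul, h, ← Measure.map_smul, hσS,
      ← Measure.map_add _ _ hf, Measure.restrict_add_restrict_compl hS]
  have hτ' : IsCoupling μ₀ μ₁ (σ S • τ + σ.restrict Sᶜ) := by
    have := hτ.1
    exact ⟨⟨by simp [measure_add_measure_compl hS]⟩, (hmarg _ measurable_fst hτ.2.1).trans hσ.1.2.1,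
      (hmarg _ measurable_snd hτ.2.2).trans hσ.1.2.2⟩
  have hrest : transportCost (σ.restrict Sᶜ) ≠ ∞ :=
    ne_top_of_le_ne_top hfin (lintegral_mono' Measure.restrict_le_self le_rfl)
  have key : σ S * transportCost σ[|S] + transportCost (σ.restrict Sᶜ) ≤
      σ S * transportCost τ + transportCost (σ.restrict Sᶜ) :=
    calc σ S * transportCost σ[|S] + transportCost (σ.restrict Sᶜ) = transportCost σ := by
          rw [← transportCost_smul, hσS, ← transportCost_add,
            Measure.restrict_add_restrict_compl hS]
      _ ≤ transportCost (σ S • τ + σ.restrict Sᶜ) := hσ.2 _ hτ'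
      _ = σ S * transportCost τ + transportCost (σ.restrict Sᶜ) := by simp
  exact (ENNReal.mul_le_mul_iff_right hS₀ (measure_ne_top _ _)).1
    ((ENNReal.add_le_add_iff_right hrest).1 key)

lemma IsOptimalPlan.smul_add_smul {σ₁ σ₂ : Measure (X × X)} (h₁ : IsOptimalPlan μ₀ μ₁ σ₁)
    (h₂ : IsOptimalPlan μ₀ μ₁ σ₂) {w₁ w₂ : ℝ≥0∞} (hw : w₁ + w₂ = 1) :
    IsOptimalPlan μ₀ μ₁ (w₁ • σ₁ + w₂ • σ₂) := by
  have hμ : ∀ μ : Measure X, w₁ • μ + w₂ • μ = μ := fun μ => by rw [← add_smul, hw, one_smul]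
  refine ⟨by simpa only [hμ] using h₁.1.smul_add_smul h₂.1 hw, fun τ hτ => ?_⟩
  calc transportCost (w₁ • σ₁ + w₂ • σ₂)
      = w₁ * transportCost σ₁ + w₂ * transportCost σ₂ := by simp
    _ ≤ w₁ * transportCost τ + w₂ * transportCost τ := by
        gcongr
        exacts [h₁.2 τ hτ, h₂.2 τ hτ]
    _ = transportCost τ := by rw [← add_mul, hw, one_mul]

lemma IsP2ac.of_le_smul {𝔪 ρ ξ : Measure X} (h : IsP2ac 𝔪 ρ) [IsProbabilityMeasure ξ]
    {c : ℝ≥0∞} (hc : c ≠ ∞) (hle : ξ ≤ c • ρ) : IsP2ac 𝔪 ξ := by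
  obtain ⟨-, hac, x₀, hx₀⟩ := h
  refine ⟨inferInstance, (Measure.absolutelyContinuous_of_le hle).trans (hac.smul_left c), x₀, ?_⟩
  calc ∫⁻ x, ENNReal.ofReal (dist x x₀ ^ 2) ∂ξ
      ≤ ∫⁻ x, ENNReal.ofReal (dist x x₀ ^ 2) ∂(c • ρ) := lintegral_mono' hle le_rfl
    _ = c * ∫⁻ x, ENNReal.ofReal (dist x x₀ ^ 2) ∂ρ := lintegral_smul_measure _ _
    _ < ∞ := ENNReal.mul_lt_top hc.lt_top hx₀

lemma IsP2ac.map_cond {Z : Type*} [MeasurableSpace Z] {𝔪 : Measure X} {ρ : Measure Z}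
    [IsFiniteMeasure ρ] {f : Z → X} (hf : Measurable f) (h : IsP2ac 𝔪 (ρ.map f)) {S : Set Z}
    (hS₀ : ρ S ≠ 0) : IsP2ac 𝔪 ((ρ[|S]).map f) := by
  have := cond_isProbabilityMeasure hS₀ (μ := ρ)
  have := Measure.isProbabilityMeasure_map (μ := ρ[|S]) hf.aemeasurable
  refine h.of_le_smul (ENNReal.inv_ne_top.2 hS₀) ?_
  rw [ProbabilityTheory.cond, Measure.map_smul]
  gcongr
  exact Measure.restrict_le_self

end Cost

section OptimalMaps

variable {X : Type*} [MetricSpace X] [MeasurableSpace X] [BorelSpace X] {𝔪 μ₀ μ₁ : Measure X}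
  {σ : Measure (X × X)}

lemma measurable_endpoints : Measurable fun γ : C(unitInterval, X) => (γ 0, γ 1) :=
  (continuous_eval_const 0).measurable.prodMk (continuous_eval_const 1).measurable

lemma GeoPlanInducedByMap.planInducedByMap {π : Measure C(unitInterval, X)}
    (h : GeoPlanInducedByMap μ₀ π) : PlanInducedByMap μ₀ (π.map fun γ => (γ 0, γ 1)) := by
  obtain ⟨S, hS, rfl, hS₀⟩ := h
  refine ⟨fun x => S x 1, (continuous_eval_const 1).measurable.comp hS, ?_⟩
  rw [Measure.map_map measurable_endpoints hS]
  exact Measure.map_congr (hS₀.mono fun x hx => by simp [hx])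

lemma IsOptGeoPlan.smul_add_smul {α₁ α₂ ν₁ ν₂ : Measure X} {σ₁ σ₂ : Measure (X × X)}
    {π₁ π₂ : Measure C(unitInterval, X)} (hπ₁ : IsOptGeoPlan α₁ ν₁ π₁)
    (hπ₂ : IsOptGeoPlan α₂ ν₂ π₂) (hσ₁ : IsCoupling α₁ ν₁ σ₁) (hσ₂ : IsCoupling α₂ ν₂ σ₂)
    {w₁ w₂ : ℝ≥0∞} (hw : w₁ + w₂ = 1) (hσ : IsOptimalPlan μ₀ μ₁ (w₁ • σ₁ + w₂ • σ₂)) :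
    IsOptGeoPlan μ₀ μ₁ (w₁ • π₁ + w₂ • π₂) := by
  obtain ⟨hp₁, hgeo₁, hopt₁⟩ := hπ₁
  obtain ⟨hp₂, hgeo₂, hopt₂⟩ := hπ₂
  have hcoup := hσ₁.smul_add_smul hσ₂ hw
  have hμ₀ : μ₀ = w₁ • α₁ + w₂ • α₂ := hσ.1.2.1.symm.trans hcoup.2.1
  have hμ₁ : μ₁ = w₁ • ν₁ + w₂ • ν₂ := hσ.1.2.2.symm.trans hcoup.2.2
  refine ⟨⟨by simp [hw]⟩, by simp [hgeo₁, hgeo₂], ?_, fun τ hτ => ?_⟩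
  · rw [map_smul_add_smul measurable_endpoints, hμ₀, hμ₁]
    exact hopt₁.1.smul_add_smul hopt₂.1 hw
  · calc transportCost ((w₁ • π₁ + w₂ • π₂).map fun γ => (γ 0, γ 1))
        ≤ transportCost (w₁ • σ₁ + w₂ • σ₂) := by
          rw [map_smul_add_smul measurable_endpoints]
          simp only [transportCost_add, transportCost_smul]
          gcongr
          exacts [hopt₁.2 _ hσ₁, hopt₂.2 _ hσ₂]
      _ ≤ transportCost τ := hσ.2 τ hτ

lemma IsOptimalPlan.isOptGeoPlan_smul_add_smul_cond (hσ : IsOptimalPlan μ₀ μ₁ σ)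
    {s : Set (X × X)} (hs : MeasurableSet s) (hs₀ : σ s ≠ 0) (hs₁ : σ sᶜ ≠ 0)
    {π₁ π₂ : Measure C(unitInterval, X)}
    (hπ₁ : IsOptGeoPlan ((σ[|s]).map Prod.fst) ((σ[|s]).map Prod.snd) π₁)
    (hπ₂ : IsOptGeoPlan ((σ[|sᶜ]).map Prod.fst) ((σ[|sᶜ]).map Prod.snd) π₂) :
    IsOptGeoPlan μ₀ μ₁ (σ s • π₁ + σ sᶜ • π₂) := by
  have := hσ.1.1
  refine hπ₁.smul_add_smul hπ₂ ⟨cond_isProbabilityMeasure hs₀, rfl, rfl⟩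
    ⟨cond_isProbabilityMeasure hs₁, rfl, rfl⟩
    (by rw [measure_add_measure_compl hs, measure_univ]) ?_
  rwa [measure_smul_cond, measure_smul_cond, Measure.restrict_add_restrict_compl hs]

lemma IsOptimalPlan.exists_cond_absolutelyContinuous (h₀ : IsP2ac 𝔪 μ₀) (h₁ : IsP2ac 𝔪 μ₁)
    (hσ : IsOptimalPlan μ₀ μ₁ σ) {U : Set X} (hU : MeasurableSet U)
    (hU' : ¬(σ.restrict (Prod.snd ⁻¹' U)).map Prod.fst ⟂ₘ
      (σ.restrict (Prod.snd ⁻¹' Uᶜ)).map Prod.fst) :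
    ∃ σ' : Measure (X × X), IsOptimalPlan (σ'.map Prod.fst) (σ'.map Prod.snd) σ' ∧
      IsP2ac 𝔪 (σ'.map Prod.fst) ∧ IsP2ac 𝔪 (σ'.map Prod.snd) ∧
      σ' (Prod.snd ⁻¹' U) ≠ 0 ∧ σ' (Prod.snd ⁻¹' Uᶜ) ≠ 0 ∧
      (σ'.restrict (Prod.snd ⁻¹' Uᶜ)).map Prod.fst ≪
        (σ'.restrict (Prod.snd ⁻¹' U)).map Prod.fst := by
  have := hσ.1.1
  obtain ⟨E, hE, hνE, hac⟩ := exists_restrict_absolutelyContinuous_of_not_mutuallySingular hU'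
  have hE₀ : σ (Prod.fst ⁻¹' E) ≠ 0 := fun h => hνE <| by
    rw [Measure.map_apply measurable_fst hE]
    exact nonpos_iff_eq_zero.1 ((Measure.restrict_apply_le _ _).trans h.le)
  obtain ⟨x₀, hx₀⟩ := h₀.2.2
  obtain ⟨x₁, hx₁⟩ := h₁.2.2
  have hσ' := hσ.cond (hσ.1.transportCost_ne_top hx₀ hx₁) (measurable_fst hE) hE₀
  have hmarg := map_fst_restrict_cond_fst_preimage σ hE (measurable_snd hU)
  have hmargc := map_fst_restrict_cond_fst_preimage σ hE (measurable_snd hU.compl)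
  have hac' := hac.smul (σ (Prod.fst ⁻¹' E))⁻¹
  rw [← hmarg, ← hmargc] at hac'
  have hUc : σ[|Prod.fst ⁻¹' E] (Prod.snd ⁻¹' Uᶜ) ≠ 0 := by
    have := congrArg (· Set.univ) hmargc
    simp only [Measure.map_apply measurable_fst MeasurableSet.univ, Measure.restrict_apply_univ,
      Set.preimage_univ, Measure.smul_apply, smul_eq_mul] at this
    rw [this]
    exact mul_ne_zero (ENNReal.inv_ne_zero.2 (measure_ne_top _ _)) hνE
  refine ⟨_, hσ', IsP2ac.map_cond measurable_fst (hσ.1.2.1 ▸ h₀) hE₀,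
    IsP2ac.map_cond measurable_snd (hσ.1.2.2 ▸ h₁) hE₀, fun h => hUc ?_, hUc, hac'⟩
  rw [Measure.restrict_eq_zero.2 h, Measure.map_zero, Measure.absolutelyContinuous_zero_iff,
    Measure.map_eq_zero_iff measurable_fst.aemeasurable, Measure.restrict_eq_zero] at hac'
  exact hac'

theorem planInducedByMap_of_isOptimalPlan [StandardBorelSpace X]
    (hexists : ∀ μ₀ μ₁ : Measure X, IsP2ac 𝔪 μ₀ → IsP2ac 𝔪 μ₁ →
      ∃ π : Measure C(unitInterval, X), IsOptGeoPlan μ₀ μ₁ π)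
    (hmap : ∀ μ₀ μ₁ : Measure X, IsP2ac 𝔪 μ₀ → IsP2ac 𝔪 μ₁ →
      ∀ π : Measure C(unitInterval, X), IsOptGeoPlan μ₀ μ₁ π → GeoPlanInducedByMap μ₀ π)
    (h₀ : IsP2ac 𝔪 μ₀) (h₁ : IsP2ac 𝔪 μ₁) (hσ : IsOptimalPlan μ₀ μ₁ σ) :
    PlanInducedByMap μ₀ σ := by
  obtain ⟨x₀, -⟩ := h₀.2.2
  have : Nonempty X := ⟨x₀⟩
  obtain ⟨T, hT, hae⟩ := exists_measurable_ae_eq_graph fun U hU =>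
    exists_ae_mem_iff_of_mutuallySingular <| by
      by_contra hsplit
      obtain ⟨σ', hσ', hP₀, hP₁, hU₀, hU₁, hac⟩ :=
        hσ.exists_cond_absolutelyContinuous h₀ h₁ hU hsplit
      have := hσ'.1.1
      obtain ⟨π₁, hπ₁⟩ := hexists _ _ (hP₀.map_cond measurable_fst hU₀)
        (hP₁.map_cond measurable_snd hU₀)
      obtain ⟨π₂, hπ₂⟩ := hexists _ _ (hP₀.map_cond measurable_fst hU₁)
        (hP₁.map_cond measurable_snd hU₁)
      have hglued := hσ'.isOptGeoPlan_smul_add_smul_cond (measurable_snd hU) hU₀ hU₁ hπ₁ hπ₂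
      have hinduced := (hmap _ _ hP₀ hP₁ _ hglued).planInducedByMap
      rw [map_smul_add_smul measurable_endpoints] at hinduced
      exact not_planInducedByMap_smul_add_smul hU hπ₁.2.2.1 hπ₂.2.2.1 hac hU₀ hU₁ hinduced
  exact ⟨T, hT, eq_map_graph_of_ae_eq hσ.1.2.1 hT hae⟩

end OptimalMaps

variable {X : Type*} [MetricSpace X] [MeasurableSpace X] [BorelSpace X]

/-- (Proposition `ylim`) let `(X,d,𝔪)` be a complete separable metric
measure space such that for all `μ₀, μ₁ ∈ 𝒫₂^{ac}(X)` the set `OptGeo(μ₀,μ₁)` is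
nonempty and every optimal dynamical plan in it is induced by a map. Then for all
`μ₀, μ₁ ∈ 𝒫₂^{ac}(X)` every optimal plan `σ ∈ Opt(μ₀,μ₁)` is induced by a map; in
particular the optimal plan is unique. -/
theorem stmt_10 [CompleteSpace X] [TopologicalSpace.SeparableSpace X]
    (𝔪 : Measure X)
    (hexists : ∀ μ₀ μ₁ : Measure X, IsP2ac 𝔪 μ₀ → IsP2ac 𝔪 μ₁ →
      ∃ π : Measure C(unitInterval, X), IsOptGeoPlan μ₀ μ₁ π)
    (hmap : ∀ μ₀ μ₁ : Measure X, IsP2ac 𝔪 μ₀ → IsP2ac 𝔪 μ₁ →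
      ∀ π : Measure C(unitInterval, X), IsOptGeoPlan μ₀ μ₁ π →
        GeoPlanInducedByMap μ₀ π) :
    ∀ μ₀ μ₁ : Measure X, IsP2ac 𝔪 μ₀ → IsP2ac 𝔪 μ₁ →
      (∀ σ : Measure (X × X), IsOptimalPlan μ₀ μ₁ σ → PlanInducedByMap μ₀ σ) ∧
      ∀ σ σ' : Measure (X × X), IsOptimalPlan μ₀ μ₁ σ → IsOptimalPlan μ₀ μ₁ σ' →
        σ = σ' := by
  intro μ₀ μ₁ h₀ h₁
  have hinduced : ∀ σ, IsOptimalPlan μ₀ μ₁ σ → PlanInducedByMap μ₀ σ :=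
    fun σ hσ => planInducedByMap_of_isOptimalPlan hexists hmap h₀ h₁ hσ
  refine ⟨hinduced, fun σ σ' hσ hσ' => ?_⟩
  have h2 : (2 : ℝ≥0∞)⁻¹ ≠ 0 := ENNReal.inv_ne_zero.2 ENNReal.ofNat_ne_top
  obtain ⟨T, hT, hae⟩ :=
    (hinduced _ (hσ.smul_add_smul hσ' ENNReal.inv_two_add_inv_two)).exists_ae_eq_graph
  rw [eq_map_graph_of_ae_eq hσ.1.2.1 hT
      (((Measure.absolutelyContinuous_smul h2).add_right _).ae_le hae),
    eq_map_graph_of_ae_eq hσ'.1.2.1 hT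
      (((Measure.absolutelyContinuous_smul h2).add_right' _).ae_le hae)]
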